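/- arXiv:2305.08813 — 6 statements merged into one kernel-verified Lean document; each statement's English description precedes it below -/
import Mathlib

section
/- Let n, d be positive integers, let B be an n×d real matrix with rows b_1, …, b_n, and let A = B Bᵀ. Suppose i ≠ j are indices such that b_i and b_j are nonzero, and let φ = arccos(⟨b_i, b_j⟩ / (‖b_i‖‖b_j‖)) be the angle between b_i and b_j. Then the smallest eigenvalue of A satisfies λ_min(A) ≤ (2‖b_i‖²‖b_j‖² / (‖b_i‖² + ‖b_j‖²)) · (1 − cos φ), and consequently λ_min(A) ≤ (‖b_i‖²‖b_j‖² / (‖b_i‖² + ‖b_j‖²)) · φ². -/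
open scoped RealInnerProductSpace

namespace Matrix

variable {ι : Type*} [Fintype ι] [DecidableEq ι]

/-- `A - λ_min • 1` has nonnegative spectrum, hence is positive semidefinite. -/
theorem IsHermitian.sInf_spectrum_mul_dotProduct_self_le {A : Matrix ι ι ℝ} (hA : A.IsHermitian)
    (x : ι → ℝ) : sInf (spectrum ℝ A) * (x ⬝ᵥ x) ≤ x ⬝ᵥ A *ᵥ x := by
  set c := sInf (spectrum ℝ A)
  have hpsd : (A - algebraMap ℝ _ c).PosSemidef := by
    refine posSemidef_iff_isHermitian_and_spectrum_nonneg.2 ⟨?_, ?_⟩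
    · exact hA.sub (IsSelfAdjoint.algebraMap _ (.all c))
    · rw [← spectrum.sub_singleton_eq]
      rintro _ ⟨μ, hμ, _, rfl, rfl⟩
      exact sub_nonneg.2 (csInf_le A.finite_real_spectrum.bddBelow hμ)
  have := hpsd.dotProduct_mulVec_nonneg x
  rwa [sub_mulVec, dotProduct_sub, sub_nonneg, Algebra.algebraMap_eq_smul_one, smul_mulVec,
    one_mulVec, dotProduct_smul, smul_eq_mul] at this

theorem dotProduct_gram_mulVec_single_sub_single {E : Type*} [NormedAddCommGroup E]
    [InnerProductSpace ℝ E] (v : ι → E) (i j : ι) (a c : ℝ) :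
    (Pi.single i a - Pi.single j c) ⬝ᵥ gram ℝ v *ᵥ (Pi.single i a - Pi.single j c) =
      ‖a • v i - c • v j‖ ^ 2 := by
  have h := star_dotProduct_gram_mulVec (𝕜 := ℝ) v (Pi.single i a - Pi.single j c)
    (Pi.single i a - Pi.single j c)
  rw [star_trivial, real_inner_self_eq_norm_sq] at h
  rw [h]
  simp [sub_smul, Finset.sum_sub_distrib, Pi.single_apply, ite_smul]

theorem single_sub_single_dotProduct_self {i j : ι} (hij : i ≠ j) (a c : ℝ) :
    (Pi.single i a - Pi.single j c) ⬝ᵥ (Pi.single i a - Pi.single j c) = a ^ 2 + c ^ 2 := by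
  simp [dotProduct_sub, hij, hij.symm]
  ring

end Matrix

namespace InnerProductGeometry

variable {E : Type*} [NormedAddCommGroup E] [InnerProductSpace ℝ E]

theorem norm_norm_smul_sub_norm_smul_sq (u v : E) :
    ‖‖v‖ • u - ‖u‖ • v‖ ^ 2 = 2 * ‖u‖ ^ 2 * ‖v‖ ^ 2 * (1 - Real.cos (angle u v)) := by
  rw [norm_sub_sq_real, norm_smul, norm_smul, real_inner_smul_left, real_inner_smul_right,
    ← cos_angle_mul_norm_mul_norm]
  simp only [norm_norm]
  ring

end InnerProductGeometry

theorem smallest_eigenvalue_le_of_small_angle_general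
    {n d : ℕ}
    (b : Fin n → EuclideanSpace ℝ (Fin d))
    (A : Matrix (Fin n) (Fin n) ℝ)
    (hA : ∀ k l, A k l = ⟪b k, b l⟫)
    (i j : Fin n) (hij : i ≠ j) (hbi : b i ≠ 0)
    (φ : ℝ) (hφ : φ = InnerProductGeometry.angle (b i) (b j)) :
    sInf (spectrum ℝ A) ≤
      2 * ‖b i‖ ^ 2 * ‖b j‖ ^ 2 / (‖b i‖ ^ 2 + ‖b j‖ ^ 2) * (1 - Real.cos φ) ∧
    sInf (spectrum ℝ A) ≤
      ‖b i‖ ^ 2 * ‖b j‖ ^ 2 / (‖b i‖ ^ 2 + ‖b j‖ ^ 2) * φ ^ 2 := by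
  obtain rfl : A = Matrix.gram ℝ b := Matrix.ext hA
  -- Rayleigh bound at `x = ‖b j‖ eᵢ - ‖b i‖ eⱼ`, where `xᵀ A x = ‖‖b j‖ b i - ‖b i‖ b j‖²`.
  have hray := (Matrix.isHermitian_gram ℝ b).sInf_spectrum_mul_dotProduct_self_le
    (Pi.single i ‖b j‖ - Pi.single j ‖b i‖)
  rw [Matrix.dotProduct_gram_mulVec_single_sub_single,
    Matrix.single_sub_single_dotProduct_self hij,
    InnerProductGeometry.norm_norm_smul_sub_norm_smul_sq, ← hφ] at hray
  have hs : 0 < ‖b i‖ ^ 2 + ‖b j‖ ^ 2 :=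
    add_pos_of_pos_of_nonneg (pow_pos (norm_pos_iff.2 hbi) 2) (sq_nonneg _)
  have hcos : sInf (spectrum ℝ (Matrix.gram ℝ b)) ≤
      2 * ‖b i‖ ^ 2 * ‖b j‖ ^ 2 / (‖b i‖ ^ 2 + ‖b j‖ ^ 2) * (1 - Real.cos φ) := by
    rw [div_mul_eq_mul_div, le_div_iff₀ hs]
    linarith
  refine ⟨hcos, hcos.trans ?_⟩
  calc _ = ‖b i‖ ^ 2 * ‖b j‖ ^ 2 / (‖b i‖ ^ 2 + ‖b j‖ ^ 2) * (2 * (1 - Real.cos φ)) := by ring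
    _ ≤ _ := by gcongr; linarith [Real.one_sub_sq_div_two_le_cos (x := φ)]

/-- Proposition 2.2, quantitative form, upper bound on `λ_min`.
`b 1, …, b n` are the rows of an `n × d` real matrix `B` (viewed as vectors of
`EuclideanSpace ℝ (Fin d)`), and `A = B Bᵀ` is the Gram matrix of the rows, i.e.
`A k l = ⟪b k, b l⟫`.  `sInf (spectrum ℝ A)` is the smallest eigenvalue of `A`.
If `i ≠ j`, `b i, b j ≠ 0` and `φ` is the angle between `b i` and `b j`, then
`λ_min(A) ≤ (2‖b i‖²‖b j‖²/(‖b i‖² + ‖b j‖²))·(1 − cos φ)` and consequently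
`λ_min(A) ≤ (‖b i‖²‖b j‖²/(‖b i‖² + ‖b j‖²))·φ²`. -/
theorem smallest_eigenvalue_le_of_small_angle
    {n d : ℕ} (hn : 0 < n) (hd : 0 < d)
    (b : Fin n → EuclideanSpace ℝ (Fin d))
    (A : Matrix (Fin n) (Fin n) ℝ)
    (hA : ∀ k l, A k l = ⟪b k, b l⟫)
    (i j : Fin n) (hij : i ≠ j) (hbi : b i ≠ 0) (hbj : b j ≠ 0)
    (φ : ℝ) (hφ : φ = InnerProductGeometry.angle (b i) (b j)) :
    sInf (spectrum ℝ A) ≤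
      2 * ‖b i‖ ^ 2 * ‖b j‖ ^ 2 / (‖b i‖ ^ 2 + ‖b j‖ ^ 2) * (1 - Real.cos φ) ∧
    sInf (spectrum ℝ A) ≤
      ‖b i‖ ^ 2 * ‖b j‖ ^ 2 / (‖b i‖ ^ 2 + ‖b j‖ ^ 2) * φ ^ 2 :=
  smallest_eigenvalue_le_of_small_angle_general b A hA i j hij hbi φ hφ
end

section
/- Define g : [0, π) → ℝ by g(z) = arccos( ((π − z) cos z + sin z)/π ). Then g is strictly monotonically increasing on [0, π); equivalently, the function z ↦ ((π − z) cos z + sin z)/π is strictly monotonically decreasing on [0, π), with values in (−1, 1]. -/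
/-! The derivative of `gAux` is `-(π - z) sin z / π`, negative on `(0, π)`, so `gAux` decreases
strictly on `[0, π]` from `gAux 0 = 1` to `gAux π = 0`. Since `arccos` is strictly decreasing on
`[-1, 1]`, the composite `g = arccos ∘ gAux` increases strictly. -/

/-- The layer-to-layer embedding-angle map of an infinitely wide ReLU network:
`g z = arccos(((π − z) cos z + sin z)/π)`. -/
noncomputable def g (z : ℝ) : ℝ :=
  Real.arccos (((Real.pi - z) * Real.cos z + Real.sin z) / Real.pi)

/-- The auxiliary function `g̃ z = ((π − z) cos z + sin z)/π`, so that `g = arccos ∘ g̃`. -/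
noncomputable def gAux (z : ℝ) : ℝ :=
  ((Real.pi - z) * Real.cos z + Real.sin z) / Real.pi

open Real Set

lemma g_eq_arccos_comp_gAux : g = arccos ∘ gAux := rfl

lemma gAux_zero : gAux 0 = 1 := by
  simp [gAux, pi_ne_zero]

lemma gAux_pi : gAux π = 0 := by
  simp [gAux]

lemma continuous_gAux : Continuous gAux := by
  unfold gAux
  fun_prop

lemma hasDerivAt_gAux (z : ℝ) : HasDerivAt gAux (-((π - z) * sin z) / π) z := by
  have h : HasDerivAt gAux (((0 - 1) * cos z + (π - z) * -sin z + cos z) / π) z :=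
    ((((hasDerivAt_const z π).sub (hasDerivAt_id z)).mul (hasDerivAt_cos z)).add
      (hasDerivAt_sin z)).div_const π
  exact h.congr_deriv (by ring)

lemma deriv_gAux_neg {z : ℝ} (hz : z ∈ Ioo 0 π) : deriv gAux z < 0 := by
  have hsin : 0 < sin z := sin_pos_of_pos_of_lt_pi hz.1 hz.2
  have hpi_sub : 0 < π - z := sub_pos.2 hz.2
  rw [(hasDerivAt_gAux z).deriv, neg_div, neg_lt_zero]
  positivity

lemma strictAntiOn_gAux : StrictAntiOn gAux (Icc 0 π) := by
  refine strictAntiOn_of_deriv_neg (convex_Icc 0 π) continuous_gAux.continuousOn fun z hz => ?_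
  rw [interior_Icc] at hz
  exact deriv_gAux_neg hz

lemma gAux_mem_Ioc_of_mem_Ico {z : ℝ} (hz : z ∈ Ico 0 π) : gAux z ∈ Ioc 0 1 := by
  have hz' : z ∈ Icc 0 π := Ico_subset_Icc_self hz
  have hpi : π ∈ Icc 0 π := right_mem_Icc.2 pi_nonneg
  have h0 : (0 : ℝ) ∈ Icc 0 π := left_mem_Icc.2 pi_nonneg
  refine ⟨gAux_pi ▸ strictAntiOn_gAux hz' hpi hz.2, gAux_zero ▸ ?_⟩
  exact strictAntiOn_gAux.antitoneOn h0 hz' hz.1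

lemma gAux_mem_Ioc_neg_one_of_mem_Ico {z : ℝ} (hz : z ∈ Ico 0 π) : gAux z ∈ Ioc (-1) 1 :=
  Ioc_subset_Ioc_left (by norm_num) (gAux_mem_Ioc_of_mem_Ico hz)

/-- Part 1 of Proposition A.1 of the paper.
`g` is strictly monotonically increasing on `[0, π)`; equivalently, the function
`z ↦ ((π − z) cos z + sin z)/π` is strictly monotonically decreasing on `[0, π)`,
with values in `(−1, 1]`. -/
theorem g_strictMonoOn :
    StrictMonoOn g (Set.Ico 0 Real.pi) ∧
    StrictAntiOn gAux (Set.Ico 0 Real.pi) ∧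
    ∀ z ∈ Set.Ico (0 : ℝ) Real.pi, gAux z ∈ Set.Ioc (-1 : ℝ) 1 := by
  have hanti : StrictAntiOn gAux (Ico 0 π) := strictAntiOn_gAux.mono Ico_subset_Icc_self
  have hmaps : MapsTo gAux (Ico 0 π) (Icc (-1) 1) := fun _ hz =>
    Ioc_subset_Icc_self (gAux_mem_Ioc_neg_one_of_mem_Ico hz)
  refine ⟨?_, hanti, fun _ => gAux_mem_Ioc_neg_one_of_mem_Ico⟩
  rw [g_eq_arccos_comp_gAux]
  exact strictAntiOn_arccos.comp hanti hmaps
end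

section
/- Define g : [0, π) → [0, π) by g(z) = arccos( ((π − z) cos z + sin z)/π ), and let g^l denote the l-fold composition of g (with g^0 the identity). Then for every z ∈ [0, π): (i) the sequence (g^l(z))_{l ≥ 0} is monotonically decreasing, strictly decreasing whenever z > 0; and (ii) lim_{l → ∞} g^l(z) = 0. -/
open Real Filter

lemma num_lt_pi {z : ℝ} (hz0 : 0 < z) (hzπ : z < Real.pi) :
    (Real.pi - z) * Real.cos z + Real.sin z < Real.pi := by
  have h1 : (Real.pi - z) * Real.cos z ≤ Real.pi - z := by
    nlinarith [Real.cos_le_one z, sub_pos.mpr hzπ]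
  have h2 : Real.sin z < z := Real.sin_lt hz0
  linarith

lemma cos_mul_lt_sin {z : ℝ} (hz0 : 0 < z) (hzπ : z < Real.pi) :
    z * Real.cos z < Real.sin z := by
  rcases lt_or_ge z (Real.pi / 2) with h | h
  · have hc : 0 < Real.cos z := Real.cos_pos_of_mem_Ioo ⟨by linarith, h⟩
    have ht : z < Real.tan z := Real.lt_tan hz0 h
    rw [Real.tan_eq_sin_div_cos, lt_div_iff₀ hc] at ht
    linarith
  · have hs : 0 < Real.sin z := Real.sin_pos_of_pos_of_lt_pi hz0 hzπ
    have hc : Real.cos z ≤ 0 :=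
      Real.cos_nonpos_of_pi_div_two_le_of_le h (by linarith [Real.pi_pos])
    nlinarith

lemma g_lt {z : ℝ} (hz0 : 0 < z) (hzπ : z < Real.pi) : g z < z := by
  have hπ := Real.pi_pos
  set N : ℝ := (Real.pi - z) * Real.cos z + Real.sin z with hN
  have h1 : N / Real.pi ≤ 1 := by
    rw [div_le_one hπ]; exact (num_lt_pi hz0 hzπ).le
  have hlow : Real.cos z < N / Real.pi := by
    rw [lt_div_iff₀ hπ]
    nlinarith [cos_mul_lt_sin hz0 hzπ]
  have hm1 : (-1 : ℝ) ≤ Real.cos z := Real.neg_one_le_cos z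
  have := Real.strictAntiOn_arccos ⟨hm1, Real.cos_le_one z⟩
    ⟨by linarith, h1⟩ hlow
  rwa [Real.arccos_cos hz0.le hzπ.le] at this

lemma g_nonneg (z : ℝ) : 0 ≤ g z := Real.arccos_nonneg _

lemma g_zero : g 0 = 0 := by
  have hπ := Real.pi_ne_zero
  simp [g, div_self hπ]

lemma g_pos {z : ℝ} (hz0 : 0 < z) (hzπ : z < Real.pi) : 0 < g z := by
  have hπ := Real.pi_pos
  exact Real.arccos_pos.mpr (by rw [div_lt_one hπ]; exact num_lt_pi hz0 hzπ)

lemma g_continuous : Continuous g := by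
  unfold g
  exact Real.continuous_arccos.comp (by continuity)

/-- Part 3 of Proposition A.1 of the paper; embedding collapse with
depth. For every `z ∈ [0, π)`: (i) the sequence `l ↦ g^[l] z` of iterates is
monotonically decreasing, and strictly decreasing whenever `z > 0`; and
(ii) `g^[l] z → 0` as `l → ∞`. -/
theorem iterate_g_antitone_tendsto_zero
    (z : ℝ) (hz : z ∈ Set.Ico 0 Real.pi) :
    (∀ l : ℕ, g^[l + 1] z ≤ g^[l] z) ∧
    (0 < z → StrictAnti fun l : ℕ => g^[l] z) ∧
    Filter.Tendsto (fun l : ℕ => g^[l] z) Filter.atTop (nhds 0) := by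
  obtain ⟨hz0, hzπ⟩ := hz
  set a : ℕ → ℝ := fun l => g^[l] z with ha
  have hmem : ∀ l, 0 ≤ a l ∧ a l < Real.pi := by
    intro l
    induction l with
    | zero => exact ⟨hz0, hzπ⟩
    | succ n ih =>
      obtain ⟨h0, hπ⟩ := ih
      have hstep : a (n + 1) = g (a n) := Function.iterate_succ_apply' g n z
      rcases eq_or_lt_of_le h0 with h | h
      · rw [hstep, ← h, g_zero]; exact ⟨le_refl 0, Real.pi_pos⟩
      · rw [hstep]
        exact ⟨g_nonneg _, lt_trans (g_lt h hπ) hπ⟩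
  have hdec : ∀ l, a (l + 1) ≤ a l := by
    intro l
    obtain ⟨h0, hπ⟩ := hmem l
    have hstep : a (l + 1) = g (a l) := Function.iterate_succ_apply' g l z
    rcases eq_or_lt_of_le h0 with h | h
    · rw [hstep, ← h, g_zero]
    · rw [hstep]; exact (g_lt h hπ).le
  have hant : Antitone a := antitone_nat_of_succ_le hdec
  refine ⟨hdec, ?_, ?_⟩
  · intro hzpos
    have hpos : ∀ l, 0 < a l := by
      intro l
      induction l with
      | zero => exact hzpos
      | succ n ih =>
        have hstep : a (n + 1) = g (a n) := Function.iterate_succ_apply' g n z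
        rw [hstep]; exact g_pos ih (hmem n).2
    apply strictAnti_nat_of_succ_lt
    intro n
    have hstep : a (n + 1) = g (a n) := Function.iterate_succ_apply' g n z
    rw [hstep]
    exact g_lt (hpos n) (hmem n).2
  · have hbdd : BddBelow (Set.range a) := ⟨0, by rintro x ⟨l, rfl⟩; exact (hmem l).1⟩
    have hL : Filter.Tendsto a Filter.atTop (nhds (⨅ l, a l)) :=
      tendsto_atTop_ciInf hant hbdd
    set L : ℝ := ⨅ l, a l with hLdef
    have hL0 : 0 ≤ L := le_ciInf fun l => (hmem l).1
    have hLπ : L < Real.pi := lt_of_le_of_lt (ciInf_le hbdd 0) (hmem 0).2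
    have hfix : g L = L := by
      have h1 : Filter.Tendsto (fun l => a (l + 1)) Filter.atTop (nhds L) :=
        hL.comp (Filter.tendsto_add_atTop_nat 1)
      have h2 : Filter.Tendsto (fun l => g (a l)) Filter.atTop (nhds (g L)) :=
        (g_continuous.continuousAt.tendsto).comp hL
      have h3 : (fun l => a (l + 1)) = fun l => g (a l) := by
        funext l; exact Function.iterate_succ_apply' g l z
      rw [h3] at h1
      exact tendsto_nhds_unique h2 h1
    have hL0' : L = 0 := by
      by_contra h
      have hLpos : 0 < L := lt_of_le_of_ne hL0 (Ne.symm h)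
      exact absurd hfix (ne_of_lt (g_lt hLpos hLπ))
    rwa [hL0'] at hL
end

section
/- Define g : [0, π) → [0, π) by g(z) = arccos( ((π − z) cos z + sin z)/π ). Then, as z → 0 from the right, g(z) = z − z²/(3π) + o(z²); that is, the function z ↦ g(z) − (z − z²/(3π)) is o(z²) as z → 0⁺. -/
/-!
Since `arccos` is antitone and `g z = arccos (N z / π)` with `N z = (π - z) cos z + sin z`,
comparing `g z` with `z - a z²` amounts to comparing `N z` with `π cos (z - a z²)`.
Taylor expansion of `sin` and `cos` gives
`π cos (z - a z²) - N z = (π a - 1/3) z³ + O(z⁴)`, so for `a = 1/(3π) ± c` the sign of this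
difference is eventually that of `± c`. This squeezes `g z` between `z - (1/(3π) + c) z²`
and `z - (1/(3π) - c) z²` for all small `z > 0`, for every `c > 0`.
-/

open Asymptotics

open Real Filter Topology Set

lemma eventually_pos_of_sub_isLittleO {α : Type*} {l : Filter α} {u v : α → ℝ} {k : ℝ}
    (hk : 0 < k) (hv : ∀ᶠ x in l, 0 < v x) (h : (fun x => u x - k * v x) =o[l] v) :
    ∀ᶠ x in l, 0 < u x := by
  filter_upwards [h.def (half_pos hk), hv] with x hx hvx
  rw [Real.norm_of_nonneg hvx.le, Real.norm_eq_abs, abs_le] at hx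
  nlinarith [hx.1]

lemma eventually_abs_le_one_nhds_zero : ∀ᶠ x : ℝ in 𝓝 0, |x| ≤ 1 := by
  filter_upwards [Metric.closedBall_mem_nhds (0 : ℝ) one_pos] with x hx
  simpa using hx

lemma sin_sub_taylor_isBigO : (fun x : ℝ => sin x - (x - x ^ 3 / 6)) =O[𝓝 0] fun x => x ^ 5 :=
  IsBigO.of_bound (1 / 100) <| eventually_abs_le_one_nhds_zero.mono fun x hx => by
    simpa [div_eq_inv_mul] using sin_bound hx

lemma cos_sub_taylor_isBigO : (fun x : ℝ => cos x - (1 - x ^ 2 / 2)) =O[𝓝 0] fun x => x ^ 4 :=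
  IsBigO.of_bound (5 / 96) <| eventually_abs_le_one_nhds_zero.mono fun x hx => by
    simpa [mul_comm] using cos_bound hx

lemma sub_mul_sq_isBigO (a : ℝ) : (fun z : ℝ => z - a * z ^ 2) =O[𝓝 0] fun z => z :=
  (isBigO_refl _ _).sub <|
    ((isLittleO_pow_pow (𝕜 := ℝ) one_lt_two).isBigO.const_mul_left a).congr_right (by simp)

lemma tendsto_sub_mul_sq (a : ℝ) : Tendsto (fun z : ℝ => z - a * z ^ 2) (𝓝 0) (𝓝 0) := by
  have : Continuous fun z : ℝ => z - a * z ^ 2 := by fun_prop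
  simpa using this.tendsto 0

lemma cos_sub_mul_sq_expansion_isBigO (a : ℝ) :
    (fun z : ℝ => π * cos (z - a * z ^ 2) - ((π - z) * cos z + sin z) - (π * a - 1 / 3) * z ^ 3)
      =O[𝓝 0] fun z => z ^ 4 := by
  set Ec : ℝ → ℝ := fun x => cos x - (1 - x ^ 2 / 2)
  set Es : ℝ → ℝ := fun x => sin x - (x - x ^ 3 / 6)
  have hEc : Ec =O[𝓝 0] fun z => z ^ 4 := cos_sub_taylor_isBigO
  have hEs : Es =O[𝓝 0] fun z => z ^ 4 :=
    sin_sub_taylor_isBigO.trans (isLittleO_pow_pow (by norm_num)).isBigO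
  have hEcw : (fun z => Ec (z - a * z ^ 2)) =O[𝓝 0] fun z => z ^ 4 :=
    (hEc.comp_tendsto (tendsto_sub_mul_sq a)).trans ((sub_mul_sq_isBigO a).pow 4)
  have hzEc : (fun z => z * Ec z) =O[𝓝 0] fun z => z ^ 4 := by
    simpa using ((continuous_id.tendsto (0 : ℝ)).isBigO_one ℝ).mul hEc
  have hpoly : (fun z : ℝ => π * a ^ 2 / 2 * z ^ 4) =O[𝓝 0] fun z => z ^ 4 :=
    (isBigO_refl _ _).const_mul_left _
  refine ((((hEcw.const_mul_left π).sub (hEc.const_mul_left π)).sub hEs).add hzEc).sub hpoly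
    |>.congr_left fun z => ?_
  -- after the Taylor polynomials cancel, only `-(π a² / 2) z⁴` is left
  simp only [Ec, Es]
  ring

lemma cos_sub_mul_sq_expansion_isLittleO (a : ℝ) :
    (fun z : ℝ => π * cos (z - a * z ^ 2) - ((π - z) * cos z + sin z) - (π * a - 1 / 3) * z ^ 3)
      =o[𝓝[>] 0] fun z => z ^ 3 :=
  ((cos_sub_mul_sq_expansion_isBigO a).trans_isLittleO (isLittleO_pow_pow (by norm_num))).mono
    nhdsWithin_le_nhds

lemma eventually_sub_mul_sq_mem_Icc (a : ℝ) : ∀ᶠ z in 𝓝[>] 0, z - a * z ^ 2 ∈ Icc 0 π := by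
  have hfac : ∀ᶠ z : ℝ in 𝓝 0, 0 < 1 - a * z := by
    have : Continuous fun z : ℝ => 1 - a * z := by fun_prop
    exact this.tendsto 0 |>.eventually (lt_mem_nhds (by simp))
  have hsmall := tendsto_sub_mul_sq a |>.eventually (gt_mem_nhds pi_pos)
  filter_upwards [nhdsWithin_le_nhds hfac, nhdsWithin_le_nhds hsmall, self_mem_nhdsWithin]
    with z hfac_z hsmall_z (hz : 0 < z)
  exact ⟨by nlinarith, hsmall_z.le⟩

lemma eventually_cube_pos : ∀ᶠ z : ℝ in 𝓝[>] 0, 0 < z ^ 3 :=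
  eventually_nhdsWithin_of_forall fun _ hz => pow_pos hz 3

lemma sub_mul_sq_le_g {a : ℝ} (ha : 1 / 3 < π * a) : ∀ᶠ z in 𝓝[>] 0, z - a * z ^ 2 ≤ g z := by
  filter_upwards [eventually_pos_of_sub_isLittleO (sub_pos.2 ha) eventually_cube_pos
      (cos_sub_mul_sq_expansion_isLittleO a), eventually_sub_mul_sq_mem_Icc a] with z hcos hw
  calc z - a * z ^ 2 = arccos (cos (z - a * z ^ 2)) := (arccos_cos hw.1 hw.2).symm
    _ ≤ g z := arccos_le_arccos <| by rw [div_le_iff₀ pi_pos]; linarith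

lemma g_le_sub_mul_sq {a : ℝ} (ha : π * a < 1 / 3) : ∀ᶠ z in 𝓝[>] 0, g z ≤ z - a * z ^ 2 := by
  have hexp : (fun z => (π - z) * cos z + sin z - π * cos (z - a * z ^ 2)
      - (1 / 3 - π * a) * z ^ 3) =o[𝓝[>] 0] fun z => z ^ 3 :=
    (cos_sub_mul_sq_expansion_isLittleO a).neg_left.congr_left fun z => by ring
  filter_upwards [eventually_pos_of_sub_isLittleO (sub_pos.2 ha) eventually_cube_pos hexp,
    eventually_sub_mul_sq_mem_Icc a] with z hcos hw
  calc g z ≤ arccos (cos (z - a * z ^ 2)) :=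
        arccos_le_arccos <| by rw [le_div_iff₀ pi_pos]; linarith
    _ = z - a * z ^ 2 := arccos_cos hw.1 hw.2

/-- one-layer case of Corollary 4.2 of the paper.
As `z → 0⁺`, `g z = z − z²/(3π) + o(z²)`; i.e. the function
`z ↦ g z − (z − z²/(3π))` is `o(z²)` as `z → 0` from the right. -/
theorem g_asymptotic_expansion :
    (fun z : ℝ => g z - (z - z ^ 2 / (3 * Real.pi)))
      =o[nhdsWithin 0 (Set.Ioi 0)] fun z : ℝ => z ^ 2 := by
  refine isLittleO_iff.2 fun c hc => ?_
  have hπc : 0 < π * c := mul_pos pi_pos hc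
  have hcoef : π * (1 / (3 * π)) = 1 / 3 := by field_simp
  filter_upwards
    [sub_mul_sq_le_g (a := 1 / (3 * π) + c) (by linarith [mul_add π (1 / (3 * π)) c]),
      g_le_sub_mul_sq (a := 1 / (3 * π) - c) (by linarith [mul_sub π (1 / (3 * π)) c])]
    with z hlower hupper
  rw [Real.norm_eq_abs, Real.norm_of_nonneg (sq_nonneg z), abs_le]
  have hdiv : z ^ 2 / (3 * π) = 1 / (3 * π) * z ^ 2 := by ring
  constructor <;> linarith
end

section
/- Define g : [0, π) → [0, π) by g(z) = arccos( ((π − z) cos z + sin z)/π ), let g^l be the l-fold iterate of g (g^0 = identity), and for an integer L ≥ 0 define F_L(θ) = (1/(L+1)) Σ_{l=0}^{L} [ cos(g^l(θ)) · Π_{l'=l}^{L−1} (1 − g^{l'}(θ)/π) ] (empty product equal to 1). Then for every integer L ≥ 1 there exists δ > 0 such that for all θ ∈ (0, δ): F_L(θ) < cos θ. -/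
/-- The cosine of the model-gradient angle of an infinitely wide depth-`L` ReLU network
(Theorem 4.3 of the paper):
`F L θ = (1/(L+1)) ∑_{l=0}^{L} cos (g^[l] θ) ∏_{l'=l}^{L−1} (1 − g^[l'] θ / π)`,
with the empty product equal to `1`. -/
noncomputable def F (L : ℕ) (θ : ℝ) : ℝ :=
  (1 / ((L : ℝ) + 1)) * ∑ l ∈ Finset.range (L + 1),
    Real.cos (g^[l] θ) * ∏ l' ∈ Finset.Ico l L, (1 - g^[l'] θ / Real.pi)

lemma g_iter_mem (z : ℝ) (hz : z ∈ Set.Icc 0 Real.pi) (l : ℕ) :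
    g^[l] z ∈ Set.Icc 0 Real.pi := by
  cases l with
  | zero => simpa using hz
  | succ n =>
    rw [Function.iterate_succ_apply']
    exact ⟨Real.arccos_nonneg _, Real.arccos_le_pi _⟩

/-- better separation with ReLU, Theorem 4.4 of the paper.
For every integer `L ≥ 1` there exists `δ > 0` such that for all `θ ∈ (0, δ)`:
`F L θ < cos θ` (i.e. the model-gradient angle exceeds the input angle). -/
theorem F_lt_cos (L : ℕ) (hL : 1 ≤ L) :
    ∃ δ > 0, ∀ θ ∈ Set.Ioo (0 : ℝ) δ, F L θ < Real.cos θ := by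
  have hπ := Real.pi_pos
  have hL1 : (0 : ℝ) < (L : ℝ) + 1 := by positivity
  refine ⟨2 / (((L : ℝ) + 1) * Real.pi), by positivity, ?_⟩
  rintro θ ⟨hθ0, hθδ⟩
  have hδπ : 2 / (((L : ℝ) + 1) * Real.pi) ≤ Real.pi := by
    rw [div_le_iff₀ (by positivity)]
    have h2 : (2 : ℝ) ≤ ((L : ℝ) + 1) := by
      have : (1 : ℝ) ≤ (L : ℝ) := by exact_mod_cast hL
      linarith
    have h3 : (3 : ℝ) ≤ Real.pi := Real.pi_gt_three.le
    calc (2 : ℝ) ≤ 3 * (2 * 3) := by norm_num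
      _ ≤ Real.pi * (((L : ℝ) + 1) * Real.pi) := by gcongr <;> norm_num
  have hθπ : θ ≤ Real.pi := le_trans hθδ.le hδπ
  -- each factor of the products lies in [0,1]
  have hfac : ∀ l' : ℕ, 0 ≤ 1 - g^[l'] θ / Real.pi ∧ 1 - g^[l'] θ / Real.pi ≤ 1 := by
    intro l'
    obtain ⟨h1, h2⟩ := g_iter_mem θ ⟨hθ0.le, hθπ⟩ l'
    constructor
    · have : g^[l'] θ / Real.pi ≤ 1 := by
        rw [div_le_one hπ]; exact h2
      linarith
    · have : 0 ≤ g^[l'] θ / Real.pi := by positivity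
      linarith
  -- products lie in [0,1]
  have hprod : ∀ l : ℕ, 0 ≤ ∏ l' ∈ Finset.Ico l L, (1 - g^[l'] θ / Real.pi) ∧
      (∏ l' ∈ Finset.Ico l L, (1 - g^[l'] θ / Real.pi)) ≤ 1 := by
    intro l
    constructor
    · exact Finset.prod_nonneg fun i _ => (hfac i).1
    · exact Finset.prod_le_one (fun i _ => (hfac i).1) (fun i _ => (hfac i).2)
  -- every summand is at most 1
  have hterm : ∀ l : ℕ,
      Real.cos (g^[l] θ) * ∏ l' ∈ Finset.Ico l L, (1 - g^[l'] θ / Real.pi) ≤ 1 := by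
    intro l
    calc Real.cos (g^[l] θ) * ∏ l' ∈ Finset.Ico l L, (1 - g^[l'] θ / Real.pi)
        ≤ 1 * ∏ l' ∈ Finset.Ico l L, (1 - g^[l'] θ / Real.pi) :=
          mul_le_mul_of_nonneg_right (Real.cos_le_one _) (hprod l).1
      _ ≤ 1 := by rw [one_mul]; exact (hprod l).2
  -- the summand for l = 0 is at most 1 - θ/π
  have hterm0 :
      Real.cos (g^[0] θ) * ∏ l' ∈ Finset.Ico 0 L, (1 - g^[l'] θ / Real.pi) ≤
        1 - θ / Real.pi := by
    have hsplit : (∏ l' ∈ Finset.Ico 0 L, (1 - g^[l'] θ / Real.pi)) =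
        (1 - g^[0] θ / Real.pi) * ∏ l' ∈ Finset.Ico 1 L, (1 - g^[l'] θ / Real.pi) :=
      Finset.prod_eq_prod_Ico_succ_bot hL _
    have hrest1 : (∏ l' ∈ Finset.Ico 1 L, (1 - g^[l'] θ / Real.pi)) ≤ 1 :=
      Finset.prod_le_one (fun i _ => (hfac i).1) (fun i _ => (hfac i).2)
    calc Real.cos (g^[0] θ) * ∏ l' ∈ Finset.Ico 0 L, (1 - g^[l'] θ / Real.pi)
        ≤ 1 * ∏ l' ∈ Finset.Ico 0 L, (1 - g^[l'] θ / Real.pi) :=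
          mul_le_mul_of_nonneg_right (Real.cos_le_one _) (hprod 0).1
      _ = (1 - g^[0] θ / Real.pi) * ∏ l' ∈ Finset.Ico 1 L, (1 - g^[l'] θ / Real.pi) := by
          rw [one_mul, hsplit]
      _ ≤ (1 - g^[0] θ / Real.pi) * 1 :=
          mul_le_mul_of_nonneg_left hrest1 (hfac 0).1
      _ = 1 - θ / Real.pi := by simp
  -- bound the sum
  have hsum : (∑ l ∈ Finset.range (L + 1),
      Real.cos (g^[l] θ) * ∏ l' ∈ Finset.Ico l L, (1 - g^[l'] θ / Real.pi)) ≤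
      ((L : ℝ) + 1) - θ / Real.pi := by
    rw [Finset.sum_range_succ']
    have h1 : (∑ i ∈ Finset.range L,
        Real.cos (g^[i + 1] θ) * ∏ l' ∈ Finset.Ico (i + 1) L, (1 - g^[l'] θ / Real.pi)) ≤
        (L : ℝ) := by
      calc (∑ i ∈ Finset.range L,
          Real.cos (g^[i + 1] θ) * ∏ l' ∈ Finset.Ico (i + 1) L, (1 - g^[l'] θ / Real.pi))
          ≤ ∑ _i ∈ Finset.range L, (1 : ℝ) :=
            Finset.sum_le_sum fun i _ => hterm (i + 1)
        _ = (L : ℝ) := by simp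
    linarith
  have hF : F L θ ≤ 1 - θ / (((L : ℝ) + 1) * Real.pi) := by
    rw [F]
    have hmul := mul_le_mul_of_nonneg_left hsum
      (le_of_lt (by positivity : (0:ℝ) < 1 / ((L : ℝ) + 1)))
    calc (1 / ((L : ℝ) + 1)) * ∑ l ∈ Finset.range (L + 1),
        Real.cos (g^[l] θ) * ∏ l' ∈ Finset.Ico l L, (1 - g^[l'] θ / Real.pi)
        ≤ (1 / ((L : ℝ) + 1)) * (((L : ℝ) + 1) - θ / Real.pi) := hmul
      _ = 1 - θ / (((L : ℝ) + 1) * Real.pi) := by field_simp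
  have hcos : 1 - θ ^ 2 / 2 ≤ Real.cos θ := Real.one_sub_sq_div_two_le_cos
  have hkey : θ ^ 2 / 2 < θ / (((L : ℝ) + 1) * Real.pi) := by
    have h1 : θ < 2 / (((L : ℝ) + 1) * Real.pi) := hθδ
    rw [lt_div_iff₀ (by positivity)] at h1
    rw [lt_div_iff₀ (by positivity)]
    nlinarith
  linarith
end

section
/- Let x_1, …, x_n be nonzero vectors in ℝ^d, and for i, j ∈ [n] let θ_{ij} = arccos(⟨x_i, x_j⟩/(‖x_i‖‖x_j‖)) ∈ [0, π] be the angle between x_i and x_j (so θ_{ii} = 0). Then the n×n matrix M with entries M_{ij} = 1 − θ_{ij}/π is symmetric positive semidefinite. -/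
/-!
Writing `c i j = ⟪x i, x j⟫ / (‖x i‖ ‖x j‖)`, one has `1 - θ i j / π = 1 / 2 + arcsin (c i j) / π`.
The cosine matrix `c` is the Gram matrix of the normalized vectors, and the Taylor series of
`arcsin` has nonnegative coefficients, so by the Schur product theorem `arcsin` applied entrywise
to `r • c` is positive semidefinite for `0 < r < 1`. Letting `r → 1` handles the entries `±1`
(e.g. the diagonal), where the series is not available.
-/

open Real Set

lemma Ring.multichoose_pos {a : ℝ} (ha : 0 < a) (n : ℕ) : 0 < Ring.multichoose a n := by
  have h := Ring.factorial_nsmul_multichoose_eq_ascPochhammer a n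
  rw [Polynomial.ascPochhammer_smeval_eq_eval, nsmul_eq_mul] at h
  exact pos_of_mul_pos_right (h ▸ ascPochhammer_pos n a ha) (by positivity)

lemma Real.hasSum_multichoose_mul_pow (a : ℝ) {s : ℝ} (hs : |s| < 1) :
    HasSum (fun n => Ring.multichoose a n * s ^ n) (1 / (1 - s) ^ a) := by
  have h := (Real.one_div_one_sub_rpow_hasFPowerSeriesOnBall_zero a).hasSum
    (y := s) (by simpa [enorm_eq_nnnorm, ← NNReal.coe_lt_one] using hs)
  simpa [FormalMultilinearSeries.ofScalars_apply_eq, Ring.multichoose_eq, mul_comm] using h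

namespace Real

lemma hasSum_multichoose_half_mul_pow_two_mul {y : ℝ} (hy : |y| < 1) :
    HasSum (fun n => Ring.multichoose (1 / 2 : ℝ) n * y ^ (2 * n)) (1 / √(1 - y ^ 2)) := by
  have hy2 : |y ^ 2| < 1 := by rw [abs_pow, sq_lt_one_iff₀ (abs_nonneg y)]; exact hy
  simpa [pow_mul, sqrt_eq_rpow] using hasSum_multichoose_mul_pow (1 / 2) hy2

/-- `Ring.multichoose (1 / 2) n` is the `n`-th coefficient of `(1 - s) ^ (-1 / 2)`; integrating
`arcsin' y = (1 - y ^ 2) ^ (-1 / 2)` termwise divides it by `2 * n + 1`. -/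
noncomputable def arcsinCoeff (n : ℕ) : ℝ := Ring.multichoose (1 / 2 : ℝ) n / (2 * n + 1)

lemma arcsinCoeff_nonneg (n : ℕ) : 0 ≤ arcsinCoeff n :=
  div_nonneg (Ring.multichoose_pos (by norm_num) n).le (by positivity)

lemma hasDerivAt_arcsinCoeff_mul_pow (n : ℕ) (y : ℝ) :
    HasDerivAt (fun z => arcsinCoeff n * z ^ (2 * n + 1))
      (Ring.multichoose (1 / 2 : ℝ) n * y ^ (2 * n)) y := by
  refine ((hasDerivAt_pow (2 * n + 1) y).const_mul (arcsinCoeff n)).congr_deriv ?_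
  simp only [arcsinCoeff, Nat.add_sub_cancel]
  field_simp
  push_cast
  ring

lemma hasDerivAt_tsum_arcsinCoeff_mul_pow {y : ℝ} (hy : |y| < 1) :
    HasDerivAt (fun z => ∑' n, arcsinCoeff n * z ^ (2 * n + 1)) (1 / √(1 - y ^ 2)) y := by
  obtain ⟨r, hyr, hr1⟩ := exists_between hy
  have hr : |r| < 1 := by rwa [abs_of_nonneg ((abs_nonneg y).trans hyr.le)]
  rw [← (hasSum_multichoose_half_mul_pow_two_mul hy).tsum_eq]
  refine hasDerivAt_tsum_of_isPreconnected (hasSum_multichoose_half_mul_pow_two_mul hr).summable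
    Metric.isOpen_ball (convex_ball 0 r).isPreconnected
    (fun n z _ => hasDerivAt_arcsinCoeff_mul_pow n z) (fun n z hz => ?_)
    (Metric.mem_ball_self ((abs_nonneg y).trans_lt hyr)) (by simp) (by simpa using hyr)
  rw [mem_ball_zero_iff, norm_eq_abs] at hz
  have hb := (Ring.multichoose_pos (a := 1 / 2) (by norm_num) n).le
  rw [norm_mul, norm_of_nonneg hb, norm_pow, norm_eq_abs]
  gcongr

lemma summable_arcsinCoeff_mul_pow {y : ℝ} (hy : |y| < 1) :
    Summable fun n => arcsinCoeff n * y ^ (2 * n + 1) := by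
  have hle (n : ℕ) :
      arcsinCoeff n * y ^ (2 * n) ≤ Ring.multichoose (1 / 2 : ℝ) n * y ^ (2 * n) := by
    have hb := (Ring.multichoose_pos (a := 1 / 2) (by norm_num) n).le
    have hy2 : 0 ≤ y ^ (2 * n) := (even_two_mul n).pow_nonneg y
    gcongr
    exact div_le_self hb (by linarith [(n.cast_nonneg : (0 : ℝ) ≤ n)])
  have hs := Summable.of_nonneg_of_le (fun n => mul_nonneg (arcsinCoeff_nonneg n)
    ((even_two_mul n).pow_nonneg y)) hle (hasSum_multichoose_half_mul_pow_two_mul hy).summable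
  simpa [pow_succ, mul_assoc] using hs.mul_right y

theorem hasSum_arcsin {y : ℝ} (hy : |y| < 1) :
    HasSum (fun n => arcsinCoeff n * y ^ (2 * n + 1)) (arcsin y) := by
  have hF {z : ℝ} (hz : z ∈ Ioo (-1) 1) := hasDerivAt_tsum_arcsinCoeff_mul_pow (abs_lt.2 hz)
  have harcsin {z : ℝ} (hz : z ∈ Ioo (-1) 1) := hasDerivAt_arcsin hz.1.ne' hz.2.ne
  have hEq := isOpen_Ioo.eqOn_of_deriv_eq isPreconnected_Ioo
    (fun z hz => (hF hz).differentiableAt.differentiableWithinAt)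
    (fun z hz => (harcsin hz).differentiableAt.differentiableWithinAt)
    (fun z hz => (hF hz).deriv.trans (harcsin hz).deriv.symm)
    (by norm_num : (0 : ℝ) ∈ Ioo (-1) 1) (by simp)
  rw [← hEq (abs_lt.1 hy)]
  exact (summable_arcsinCoeff_mul_pow hy).hasSum

end Real

namespace Matrix

variable {ι : Type*}

section Finite

variable [Finite ι]

lemma posSemidef_of_const_one : (of fun _ _ => 1 : Matrix ι ι ℝ).PosSemidef := by
  simpa [vecMulVec] using posSemidef_vecMulVec_self_star (fun _ : ι => (1 : ℝ))

lemma PosSemidef.map_pow {A : Matrix ι ι ℝ} (hA : A.PosSemidef) (k : ℕ) :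
    (A.map (· ^ k)).PosSemidef := by
  induction k with
  | zero => convert posSemidef_of_const_one (ι := ι) using 1; ext; simp
  | succ k ih =>
    have h : A.map (· ^ (k + 1)) = A.map (· ^ k) ⊙ A := by ext; simp [pow_succ]
    exact h ▸ ih.hadamard hA

end Finite

variable [Fintype ι]

lemma PosSemidef.map_of_hasSum {κ : Type*} {A : Matrix ι ι ℝ} (hA : A.PosSemidef)
    {a : κ → ℝ} {e : κ → ℕ} (ha : ∀ k, 0 ≤ a k) {f : ℝ → ℝ}
    (hf : ∀ i j, HasSum (fun k => a k * A i j ^ e k) (f (A i j))) :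
    (A.map f).PosSemidef := by
  refine .of_dotProduct_mulVec_nonneg (hA.isHermitian.map f fun _ => rfl) fun v => ?_
  have hsum : HasSum (fun k => a k * (star v ⬝ᵥ A.map (· ^ e k) *ᵥ v))
      (star v ⬝ᵥ A.map f *ᵥ v) := by
    simp only [dotProduct, mulVec, map_apply, Finset.mul_sum]
    refine hasSum_sum fun i _ => hasSum_sum fun j _ => ?_
    exact (((hf i j).mul_right (v j)).mul_left (star v i)).congr_fun fun k => by ring
  exact hsum.nonneg fun k => mul_nonneg (ha k) ((hA.map_pow (e k)).dotProduct_mulVec_nonneg v)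

lemma PosSemidef.map_of_hasSum_of_continuousOn {κ : Type*} {A : Matrix ι ι ℝ}
    (hA : A.PosSemidef) (hA1 : ∀ i j, |A i j| ≤ 1) {a : κ → ℝ} {e : κ → ℕ} (ha : ∀ k, 0 ≤ a k)
    {f : ℝ → ℝ} (hf : ∀ t, |t| < 1 → HasSum (fun k => a k * t ^ e k) (f t))
    (hfc : ContinuousOn f (Icc (-1) 1)) :
    (A.map f).PosSemidef := by
  refine .of_dotProduct_mulVec_nonneg (hA.isHermitian.map f fun _ => rfl) fun v => ?_
  set q : ℝ → ℝ := fun r => star v ⬝ᵥ (r • A).map f *ᵥ v with hq_def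
  have hq : ∀ r ∈ Ioo (0 : ℝ) 1, 0 ≤ q r := fun r hr =>
    ((hA.smul hr.1.le).map_of_hasSum ha fun i j => hf _ <| by
      rw [smul_apply, smul_eq_mul, abs_mul, abs_of_pos hr.1]
      exact (mul_le_of_le_one_right hr.1.le (hA1 i j)).trans_lt hr.2).dotProduct_mulVec_nonneg v
  have hfA : ∀ i j, ContinuousOn (fun r => f (r * A i j)) (Icc 0 1) := fun i j =>
    hfc.comp (continuousOn_id.mul continuousOn_const) fun r hr => abs_le.1 <| by
      rw [abs_mul, abs_of_nonneg hr.1]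
      exact mul_le_one₀ hr.2 (abs_nonneg _) (hA1 i j)
  have hqc : ContinuousOn q (Icc 0 1) := by
    simp only [hq_def, dotProduct, mulVec, map_apply, smul_apply, smul_eq_mul]
    exact continuousOn_finsetSum _ fun i _ => continuousOn_const.mul <|
      continuousOn_finsetSum _ fun j _ => (hfA i j).mul continuousOn_const
  have h1 : (1 : ℝ) ∈ closure (Ioo 0 1) := by rw [closure_Ioo zero_ne_one]; simp
  simpa [q] using continuousWithinAt_const.closure_le h1
    ((hqc 1 (right_mem_Icc.2 zero_le_one)).mono Ioo_subset_Icc_self) hq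

end Matrix

open InnerProductGeometry in
theorem Matrix.posSemidef_one_sub_angle_div_pi {E : Type*} [NormedAddCommGroup E]
    [InnerProductSpace ℝ E] {ι : Type*} [Fintype ι] (x : ι → E) :
    (of fun i j => 1 - angle (x i) (x j) / π).PosSemidef := by
  set C : Matrix ι ι ℝ := of fun i j => inner ℝ (x i) (x j) / (‖x i‖ * ‖x j‖) with hC_def
  have hC : C.PosSemidef := by
    -- for `x i = 0` both sides vanish, by `‖0‖⁻¹ = 0` and `0 / 0 = 0`
    have hgram : C = gram ℝ fun i => ‖x i‖⁻¹ • x i := by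
      ext i j
      simp only [hC_def, of_apply, gram_apply, real_inner_smul_left, real_inner_smul_right,
        div_eq_mul_inv]
      ring
    exact hgram ▸ posSemidef_gram ℝ _
  have harcsin : (C.map arcsin).PosSemidef :=
    hC.map_of_hasSum_of_continuousOn (fun i j => abs_real_inner_div_norm_mul_norm_le_one _ _)
      arcsinCoeff_nonneg (fun _ => hasSum_arcsin) continuous_arcsin.continuousOn
  have hsplit : (of fun i j => 1 - angle (x i) (x j) / π) =
      (1 / 2 : ℝ) • of (fun _ _ => 1) + π⁻¹ • C.map arcsin := by
    ext i j
    simp only [hC_def, angle, arccos_eq_pi_div_two_sub_arcsin, add_apply, smul_apply, map_apply,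
      of_apply, smul_eq_mul, mul_one]
    field_simp
    ring
  rw [hsplit]
  exact (posSemidef_of_const_one.smul (by norm_num)).add (harcsin.smul (by positivity))

theorem one_sub_angle_div_pi_posSemidef_general
    {n d : ℕ}
    (x : Fin n → EuclideanSpace ℝ (Fin d))
    (M : Matrix (Fin n) (Fin n) ℝ)
    (hM : ∀ i j, M i j = 1 - InnerProductGeometry.angle (x i) (x j) / Real.pi) :
    M.IsSymm ∧ M.PosSemidef := by
  obtain rfl : M = .of fun i j => 1 - InnerProductGeometry.angle (x i) (x j) / Real.pi :=
    Matrix.ext hM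
  have h := Matrix.posSemidef_one_sub_angle_div_pi x
  exact ⟨Matrix.isHermitian_iff_isSymm.1 h.isHermitian, h⟩

/-- Let `x 1, …, x n` be nonzero vectors in `ℝ^d` and for `i, j` let
`θ i j = arccos(⟨x i, x j⟩/(‖x i‖‖x j‖)) ∈ [0, π]` be the angle between `x i` and `x j`.
Then the `n × n` matrix `M` with entries `M i j = 1 − θ i j / π` is symmetric positive
semidefinite. (It is the Gram matrix of the random features `√2·1{⟨w,x⟩ ≥ 0}` arising
from the Gaussian orthant probability of Lemma C.1 of the paper.) -/
theorem one_sub_angle_div_pi_posSemidef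
    {n d : ℕ} (hn : 0 < n) (hd : 0 < d)
    (x : Fin n → EuclideanSpace ℝ (Fin d)) (hx : ∀ i, x i ≠ 0)
    (M : Matrix (Fin n) (Fin n) ℝ)
    (hM : ∀ i j, M i j = 1 - InnerProductGeometry.angle (x i) (x j) / Real.pi) :
    M.IsSymm ∧ M.PosSemidef :=
  one_sub_angle_div_pi_posSemidef_general x M hM
end
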